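/- For every integer n ≥ 1, the identity Σ_{j=1}^n (−1)^{e(n,1,j)} · ((n choose n-j))_x · ((n+j-1 choose n-1))_x = 1 holds in ℚ(x). (This is the statement p(n,1,1) = 1, i.e., the (1,1) entry of the product V(n)·R_n(f_k(x)) equals 1.) -/

import Mathlib

/-- The Fibonacci polynomials: `f 0 = 0`, `f 1 = 1`, `f (n+2) = X * f (n+1) + f n`. -/
noncomputable def fibPoly : ℕ → Polynomial ℤ
  | 0 => 0
  | 1 => 1
  | n + 2 => Polynomial.X * fibPoly (n + 1) + fibPoly n

/-- The Fibonacci polynomial `f n`, viewed as an element of the field `ℚ(x)`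
of rational functions. -/
noncomputable def fp (n : ℕ) : RatFunc ℚ :=
  algebraMap (Polynomial ℚ) (RatFunc ℚ) ((fibPoly n).map (Int.castRingHom ℚ))

/-- The `x`-Fibonomial coefficient `((n choose k))_x = ∏_{i=1}^{k} f_{n-i+1} / f_i`
as an element of `ℚ(x)`.  It equals `0` when `k < 0` (and also when `k > n`,
since then a factor `f 0 = 0` appears in the numerator). -/
noncomputable def xfibinom (n : ℕ) (k : ℤ) : RatFunc ℚ :=
  if 0 ≤ k then ∏ i ∈ Finset.range k.toNat, fp (n - i) / fp (i + 1) else 0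

/-- The exponent `e(n,i,j) = n(i+j+1) + C(i,2) + C(j,2) + 1`. -/
def e (n i j : ℕ) : ℕ := n * (i + j + 1) + Nat.choose i 2 + Nat.choose j 2 + 1

noncomputable def xf (N k : ℕ) : RatFunc ℚ := ∏ i ∈ Finset.range k, fp (N - i) / fp (i + 1)

lemma fibPoly_two_step (n : ℕ) : fibPoly (n+2) = Polynomial.X * fibPoly (n+1) + fibPoly n := rfl

lemma fibPoly_add (m : ℕ) : ∀ n, fibPoly (m+n+1) = fibPoly (m+1) * fibPoly (n+1) + fibPoly m * fibPoly n := by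
  intro n
  induction n using Nat.twoStepInduction with
  | zero => simp [fibPoly]
  | one =>
    show fibPoly (m+2) = _
    rw [fibPoly_two_step]
    simp [fibPoly]; ring
  | more n ih1 ih2 =>
    have h1 : m + (n + 2) + 1 = (m + n + 1) + 2 := by omega
    rw [h1, fibPoly_two_step,
        show m + n + 1 + 1 = m + (n+1) + 1 from by omega, ih2, ih1]
    simp only [show n + 1 + 1 = n + 2 from rfl, show n + 2 + 1 = (n+1) + 2 from rfl,
      show n + 1 + 2 = (n+1) + 2 from rfl, fibPoly_two_step]
    ring

/-- Catalan identity for Fibonacci polynomials. -/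
lemma fibPoly_catalan (b : ℕ) : ∀ k, fibPoly (k+b) ^ 2 =
    fibPoly (k + 2*b) * fibPoly k + (-1) ^ k * fibPoly b ^ 2 := by
  intro k
  induction k with
  | zero => simp [fibPoly]
  | succ k ih =>
    have h1 := fibPoly_add (k+b) (k+b)
    have h2 := fibPoly_add (k + 2*b) k
    have e1 : k + b + (k + b) + 1 = k + 2*b + k + 1 := by omega
    rw [e1] at h1
    have e2 : k + 1 + b = k + b + 1 := by omega
    have e3 : k + 1 + 2*b = k + 2*b + 1 := by omega
    rw [e2, e3, pow_succ]
    linear_combination h2 - h1 - ih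
lemma fibPoly_eval_one : ∀ n : ℕ, 0 ≤ (fibPoly n).eval 1 ∧ 0 < (fibPoly (n+1)).eval 1 := by
  intro n
  induction n with
  | zero => simp [fibPoly]
  | succ k ih =>
    refine ⟨le_of_lt ih.2, ?_⟩
    rw [fibPoly_two_step]
    simp only [Polynomial.eval_add, Polynomial.eval_mul, Polynomial.eval_X, one_mul]
    exact add_pos_of_pos_of_nonneg ih.2 ih.1

lemma fibPoly_ne_zero {n : ℕ} (h : 1 ≤ n) : fibPoly n ≠ 0 := by
  intro hz
  obtain ⟨k, rfl⟩ := Nat.exists_eq_add_of_le h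
  have := (fibPoly_eval_one k).2
  rw [show 1 + k = k + 1 from by omega] at hz
  rw [hz] at this; simp at this

noncomputable def fpHom : Polynomial ℤ →+* RatFunc ℚ :=
  (algebraMap (Polynomial ℚ) (RatFunc ℚ)).comp (Polynomial.mapRingHom (Int.castRingHom ℚ))

lemma fp_eq (n : ℕ) : fp n = fpHom (fibPoly n) := rfl

lemma fpHom_injective : Function.Injective fpHom :=
  (RatFunc.algebraMap_injective ℚ).comp
    (Polynomial.map_injective _ Int.cast_injective)

lemma fp_zero : fp 0 = 0 := by simp [fp, fibPoly]

lemma fp_one : fp 1 = 1 := by simp [fp, fibPoly]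

lemma fp_ne_zero {n : ℕ} (h : 1 ≤ n) : fp n ≠ 0 := by
  rw [fp_eq]
  intro hz
  exact fibPoly_ne_zero h (fpHom_injective (by simpa using hz))
lemma fp_catalan (b k : ℕ) : fp (k+b) ^ 2 = fp (k + 2*b) * fp k + (-1) ^ k * fp b ^ 2 := by
  have h := congrArg fpHom (fibPoly_catalan b k)
  simpa only [fp_eq, map_add, map_mul, map_pow, map_neg, map_one] using h

lemma xfibinom_natCast (N k : ℕ) : xfibinom N (k : ℤ) = xf N k := by
  simp [xfibinom, xf]

lemma xf_succ (N k : ℕ) : xf N (k+1) = xf N k * (fp (N-k) / fp (k+1)) :=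
  Finset.prod_range_succ _ _

lemma xf_zero (N : ℕ) : xf N 0 = 1 := rfl

lemma xf_shift (N : ℕ) : ∀ k, k ≤ N → xf (N+1) k = xf N k * fp (N+1) / fp (N+1-k) := by
  intro k
  induction k with
  | zero =>
    intro _
    simp [xf_zero, div_self (fp_ne_zero (by omega : 1 ≤ N+1))]
  | succ k ih =>
    intro hk
    have h1 : fp (N+1-k) ≠ 0 := fp_ne_zero (by omega)
    have h2 : fp (N-k) ≠ 0 := fp_ne_zero (by omega)
    have h3 : fp (k+1) ≠ 0 := fp_ne_zero (by omega)
    rw [xf_succ, ih (by omega), xf_succ,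
      show N + 1 - (k+1) = N - k from by omega]
    field_simp

lemma xf_ne_zero (N : ℕ) : ∀ k, k ≤ N → xf N k ≠ 0 := by
  intro k
  induction k with
  | zero => intro _; rw [xf_zero]; exact one_ne_zero
  | succ k ih =>
    intro hk
    rw [xf_succ]
    exact mul_ne_zero (ih (by omega))
      (div_ne_zero (fp_ne_zero (by omega)) (fp_ne_zero (by omega)))

lemma xf_self_pred : ∀ k, xf (k+1) k = fp (k+1) := by
  intro k
  induction k with
  | zero => rw [xf_zero, fp_one]
  | succ k ih =>
    have h2 : fp (k+1) ≠ 0 := fp_ne_zero (by omega)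
    have h4 : fp 2 ≠ 0 := fp_ne_zero (by omega)
    rw [xf_succ, xf_shift (k+1) k (by omega), ih,
      show k + 2 - k = 2 from by omega, show k + 1 + 1 = k + 2 from rfl]
    field_simp
lemma e_succ (n m : ℕ) : e n 1 (m+1) = e n 1 m + (n + m) := by
  simp [e, Nat.choose_succ_succ, Nat.choose_one_right]
  ring

lemma claim (n : ℕ) (hn : 1 ≤ n) : ∀ m, 1 ≤ m → m ≤ n →
    ∑ j ∈ Finset.Icc 1 m, (-1 : RatFunc ℚ) ^ (e n 1 j) * xf n (n-j) * xf (n+j-1) (n-1)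
    = 1 + (-1) ^ (e n 1 m) * xf n (n-m) * (xf (n+m) n * (fp (n-m) / fp n)) := by
  intro m
  induction m with
  | zero => omega
  | succ m ih =>
    intro _ hm
    rcases Nat.eq_zero_or_pos m with rfl | hm1
    · -- base case m = 1
      rw [Finset.Icc_self, Finset.sum_singleton]
      have hd : fp n ≠ 0 := fp_ne_zero hn
      have hX : xf n (n-1) = fp n := by
        have := xf_self_pred (n-1)
        rwa [show n - 1 + 1 = n from by omega] at this
      have hcat : fp n ^ 2 = fp (n+1) * fp (n-1) + (-1) ^ (n-1) * fp 1 ^ 2 := by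
        have := fp_catalan 1 (n-1)
        rwa [show n - 1 + 1 = n from by omega, show n - 1 + 2*1 = n + 1 from by omega] at this
      rw [fp_one] at hcat
      have hs : (-1 : RatFunc ℚ) ^ (e n 1 1) * (-1) ^ (n-1) = 1 := by
        rw [← pow_add]
        exact Even.neg_one_pow ⟨2*n, by simp [e]; omega⟩
      rw [show n + 1 - 1 = n from by omega, show (0:ℕ) + 1 = 1 from rfl,
        xf_self_pred n, hX]
      field_simp
      linear_combination ((-1 : RatFunc ℚ) ^ (e n 1 1)) * hcat + hs
    · -- inductive step
      rw [Finset.sum_Icc_succ_top (by omega : 1 ≤ m + 1), ih hm1 (by omega)]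
      set s : RatFunc ℚ := (-1) ^ (e n 1 m) with hs
      set A := xf n (n-(m+1)) with hA
      set B := xf (n+m) (n-1) with hB
      have ha : fp (m+1) ≠ 0 := fp_ne_zero (by omega)
      have hc : fp (n-m) ≠ 0 := fp_ne_zero (by omega)
      have hd : fp n ≠ 0 := fp_ne_zero hn
      have h1 : xf n (n-m) = A * (fp (m+1) / fp (n-m)) := by
        have := xf_succ n (n-(m+1))
        rwa [show n - (m+1) + 1 = n - m from by omega,
          show n - (n-(m+1)) = m+1 from by omega, ← hA] at this
      have h2 : xf (n+m) n = B * (fp (m+1) / fp n) := by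
        have := xf_succ (n+m) (n-1)
        rwa [show n - 1 + 1 = n from by omega, show n + m - (n-1) = m+1 from by omega,
          ← hB] at this
      have h3 : xf (n+m+1) n = xf (n+m) n * fp (n+m+1) / fp (m+1) := by
        have := xf_shift (n+m) n (by omega)
        rwa [show n + m + 1 - n = m+1 from by omega] at this
      have hsgn : (-1 : RatFunc ℚ) ^ (e n 1 (m+1)) = s * (-1) ^ (n+m) := by
        rw [e_succ, pow_add, hs]
      have hcat : fp n ^ 2 = fp (n+m+1) * fp (n-(m+1)) + (-1) ^ (n-(m+1)) * fp (m+1) ^ 2 := by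
        have := fp_catalan (m+1) (n-(m+1))
        rwa [show n - (m+1) + (m+1) = n from by omega,
          show n - (m+1) + 2*(m+1) = n + m + 1 from by omega] at this
      have hodd : (-1 : RatFunc ℚ) ^ (n-(m+1)) * (-1) ^ (n+m) = -1 := by
        rw [← pow_add]
        exact Odd.neg_one_pow ⟨n-1, by omega⟩
      have hkey : (-1 : RatFunc ℚ)^(n+m) * (fp (n+m+1) * fp (n-(m+1)))
          = (-1 : RatFunc ℚ)^(n+m) * fp n ^ 2 + fp (m+1) ^ 2 := by
        linear_combination (-((-1 : RatFunc ℚ)^(n+m))) * hcat - fp (m+1)^2 * hodd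
      rw [show n + (m+1) - 1 = n + m from by omega, show n + (m+1) = n + m + 1 from rfl,
        h3, h2, h1, hsgn]
      have r1 : B * (fp (m+1) / fp n) * fp (n+m+1) / fp (m+1) = B * fp (n+m+1) / fp n := by
        field_simp
      rw [r1]
      field_simp
      rw [← hB]
      linear_combination (-(s * A * B)) * hkey

/-- The identity `p(n,1,1) = 1`:
`Σ_{j=1}^{n} (-1)^{e(n,1,j)} ((n choose n-j))_x ((n+j-1 choose n-1))_x = 1` in `ℚ(x)`. -/
theorem p_n_1_1 (n : ℕ) (hn : 1 ≤ n) :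
    ∑ j ∈ Finset.Icc 1 n,
      (-1 : RatFunc ℚ) ^ (e n 1 j) * xfibinom n ((n : ℤ) - j) *
        xfibinom (n + j - 1) ((n : ℤ) - 1) = 1 := by
  have hconv : ∀ j ∈ Finset.Icc 1 n,
      (-1 : RatFunc ℚ) ^ (e n 1 j) * xfibinom n ((n : ℤ) - j) *
        xfibinom (n + j - 1) ((n : ℤ) - 1)
      = (-1 : RatFunc ℚ) ^ (e n 1 j) * xf n (n-j) * xf (n+j-1) (n-1) := by
    intro j hj
    rw [Finset.mem_Icc] at hj
    rw [show (n : ℤ) - j = ((n - j : ℕ) : ℤ) from by omega,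
      show (n : ℤ) - 1 = ((n - 1 : ℕ) : ℤ) from by omega,
      xfibinom_natCast, xfibinom_natCast]
  rw [Finset.sum_congr rfl hconv, claim n hn n hn le_rfl, Nat.sub_self, fp_zero]
  simp
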